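/- Let a, q, α₁, α₂ ∈ ℝ and let J be an interval on which a + 2q·cos(2t) > 0. Let x : J → ℝ be twice differentiable and satisfy the damped nonlinear Mathieu equation x″(t) + [2q sin(2t)/(a + 2q cos(2t))]·x′(t) + (a + 2q cos(2t))·(x(t) + α₁ x(t)² + α₂ x(t)³) = 0 on J. Then I(t) = (1/2)·[x′(t)²/(a + 2q cos(2t)) + x(t)² + (2α₁/3)x(t)³ + (α₂/2)x(t)⁴] is constant on J. -/

import Mathlib

/-!
With `m t = a + 2q cos 2t` (the square of the modulation `ω`) and the potential
`V(x) = x²/2 + α₁x³/3 + α₂x⁴/4` of `F`, the quantity is `I = x′²/(2m) + V(x)`, and along any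
`C²` curve `I′ = (x′/m)·(x″ − (m′/(2m))·x′ + m·F(x))`. As `m′ = −4q sin 2t`, the bracket is the
left-hand side of the damped Mathieu equation, so `I′ = 0` on the interval `J`.
-/

open Real

theorem Convex.eq_of_forall_hasDerivAt_eq_zero {E : Type*} [NormedAddCommGroup E]
    [NormedSpace ℝ E] {s : Set ℝ} {f : ℝ → E} (hs : Convex ℝ s)
    (hf : ∀ t ∈ s, HasDerivAt f 0 t) {t₁ t₂ : ℝ} (ht₁ : t₁ ∈ s) (ht₂ : t₂ ∈ s) :
    f t₁ = f t₂ := by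
  have h := hs.norm_image_sub_le_of_norm_hasDerivWithin_le (f' := fun _ => (0 : E)) (C := 0)
    (fun t ht => (hf t ht).hasDerivWithinAt) (fun _ _ => norm_zero.le) ht₂ ht₁
  rwa [zero_mul, norm_le_zero_iff, sub_eq_zero] at h

/-- The energy of the modulated oscillator `(x′/ω)′ + ω V′(x) = 0`, where `m = ω²`. -/
noncomputable def oscillatorEnergy (m V x x' : ℝ → ℝ) (t : ℝ) : ℝ :=
  x' t ^ 2 / m t / 2 + V (x t)

theorem hasDerivAt_oscillatorEnergy {m V x x' : ℝ → ℝ} {m' x'' f t : ℝ}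
    (hm : HasDerivAt m m' t) (hm₀ : m t ≠ 0) (hV : HasDerivAt V f (x t))
    (hx : HasDerivAt x (x' t) t) (hx' : HasDerivAt x' x'' t) :
    HasDerivAt (oscillatorEnergy m V x x')
      (x' t / m t * (x'' - m' / m t / 2 * x' t + m t * f)) t := by
  refine ((((hx'.pow 2).div hm hm₀).div_const 2).add (hV.comp t hx)).congr_deriv ?_
  simp only [Pi.pow_apply]
  field_simp
  ring

theorem hasDerivAt_mathieu_modulation (a q t : ℝ) :
    HasDerivAt (fun s => a + 2 * q * cos (2 * s)) (-(4 * q * sin (2 * t))) t := by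
  refine ((((hasDerivAt_id t).const_mul 2).cos.const_mul (2 * q)).const_add a).congr_deriv ?_
  simp only [id]
  ring

theorem hasDerivAt_quartic_potential (α₁ α₂ y : ℝ) :
    HasDerivAt (fun y => y ^ 2 / 2 + α₁ / 3 * y ^ 3 + α₂ / 4 * y ^ 4)
      (y + α₁ * y ^ 2 + α₂ * y ^ 3) y := by
  refine ((((hasDerivAt_pow 2 y).div_const 2).add ((hasDerivAt_pow 3 y).const_mul (α₁ / 3))).add
    ((hasDerivAt_pow 4 y).const_mul (α₂ / 4))).congr_deriv ?_
  norm_num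
  ring

/-- Along any solution of the damped nonlinear Mathieu equation
x″ + [2q sin 2t/(a + 2q cos 2t)]·x′ + (a + 2q cos 2t)·(x + α₁x² + α₂x³) = 0 on an
interval J where a + 2q cos 2t > 0, the quantity
I = (1/2)[x′²/(a + 2q cos 2t) + x² + (2α₁/3)x³ + (α₂/2)x⁴] is constant. -/
theorem damped_nonlinear_mathieu_first_integral
    (a q α₁ α₂ : ℝ) (J : Set ℝ) (hJ : J.OrdConnected)
    (hpos : ∀ t ∈ J, 0 < a + 2 * q * Real.cos (2 * t))
    (x x' x'' : ℝ → ℝ)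
    (hx : ∀ t ∈ J, HasDerivAt x (x' t) t)
    (hx' : ∀ t ∈ J, HasDerivAt x' (x'' t) t)
    (hode : ∀ t ∈ J, x'' t
      + (2 * q * Real.sin (2 * t) / (a + 2 * q * Real.cos (2 * t))) * x' t
      + (a + 2 * q * Real.cos (2 * t)) * (x t + α₁ * (x t) ^ 2 + α₂ * (x t) ^ 3) = 0) :
    ∀ t₁ ∈ J, ∀ t₂ ∈ J,
      (1 / 2) * ((x' t₁) ^ 2 / (a + 2 * q * Real.cos (2 * t₁))
        + (x t₁) ^ 2 + (2 * α₁ / 3) * (x t₁) ^ 3 + (α₂ / 2) * (x t₁) ^ 4)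
      = (1 / 2) * ((x' t₂) ^ 2 / (a + 2 * q * Real.cos (2 * t₂))
        + (x t₂) ^ 2 + (2 * α₁ / 3) * (x t₂) ^ 3 + (α₂ / 2) * (x t₂) ^ 4) := by
  intro t₁ ht₁ t₂ ht₂
  have hconserved : ∀ t ∈ J, HasDerivAt (oscillatorEnergy (fun s => a + 2 * q * cos (2 * s))
      (fun y => y ^ 2 / 2 + α₁ / 3 * y ^ 3 + α₂ / 4 * y ^ 4) x x') 0 t := by
    intro t ht
    have hode_zero : x'' t - -(4 * q * sin (2 * t)) / (a + 2 * q * cos (2 * t)) / 2 * x' t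
        + (a + 2 * q * cos (2 * t)) * (x t + α₁ * x t ^ 2 + α₂ * x t ^ 3) = 0 := by
      linear_combination hode t ht
    simpa only [hode_zero, mul_zero] using
      hasDerivAt_oscillatorEnergy (hasDerivAt_mathieu_modulation a q t) (hpos t ht).ne'
        (hasDerivAt_quartic_potential α₁ α₂ (x t)) (hx t ht) (hx' t ht)
  have h := hJ.convex.eq_of_forall_hasDerivAt_eq_zero hconserved ht₁ ht₂
  simp only [oscillatorEnergy] at h
  linear_combination h
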